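/- arXiv:2412.06381 — 3 statements merged into one kernel-verified Lean document; each statement's English description precedes it below -/
import Mathlib

section
/- (Local Robustness generalization bound.) Let A map each dataset S \in Z^n to a model h = A(S) whose loss \ell_h is measurable with values in [0, C] where C = \sup_{z \in Z} \ell_h(z). For S consisting of n i.i.d. samples from P and any \delta > 0, with probability at least 1 - \delta over the draw of S: F(P,h) \le C(\sqrt{2}+1) \sqrt{ |T_S| \ln(2K/\delta) / n } + 2 C |T_S| \ln(2K/\delta) / n + F(S,h) + \sum_{i \in T_S} (n_i/n) \epsilon_i(h). -/
open MeasureTheory Finset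

open scoped Classical in
/-- Number of sample points of `S` falling in the region `A`. -/
noncomputable def cnt {Z : Type*} {n : ℕ} (S : Fin n → Z) (A : Set Z) : ℕ :=
  (Finset.univ.filter (fun j => S j ∈ A)).card

/-- Indices of the regions that contain at least one sample point. -/
noncomputable def Tset {Z : Type*} {n K : ℕ} (S : Fin n → Z) (Zpart : Fin K → Set Z) :
    Finset (Fin K) :=
  Finset.univ.filter (fun i => 0 < cnt S (Zpart i))

/-- Empirical loss of `ℓ` on the sample `S`. -/
noncomputable def empLoss {Z : Type*} {n : ℕ} (ℓ : Z → ℝ) (S : Fin n → Z) : ℝ :=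
  (∑ j, ℓ (S j)) / n

open scoped Classical in
/-- Empirical loss of `ℓ` on the subsample of `S` lying in `A`. -/
noncomputable def empLossIn {Z : Type*} {n : ℕ} (ℓ : Z → ℝ) (S : Fin n → Z) (A : Set Z) : ℝ :=
  (∑ j ∈ Finset.univ.filter (fun j => S j ∈ A), ℓ (S j)) / (cnt S A : ℝ)

/-- Conditional expectation `E[ℓ z ∣ z ∈ A]`. -/
noncomputable def condAvg {Z : Type*} [MeasurableSpace Z] (P : Measure Z) (ℓ : Z → ℝ)
    (A : Set Z) : ℝ :=
  (∫ z in A, ℓ z ∂P) / (P A).toReal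

/-- Worst-case local robustness level `sup_{s ∈ S ∩ A, z ∈ A} |ℓ s - ℓ z|`. -/
noncomputable def epsSup {Z : Type*} {n : ℕ} (ℓ : Z → ℝ) (S : Fin n → Z) (A : Set Z) : ℝ :=
  sSup {x : ℝ | ∃ j : Fin n, S j ∈ A ∧ ∃ z ∈ A, x = |ℓ (S j) - ℓ z|}

open scoped Classical in
/-- Average local sensitivity `(1/n_i) ∑_{s ∈ S ∩ A} E[|ℓ z - ℓ s| ∣ z ∈ A]`. -/
noncomputable def epsBar {Z : Type*} [MeasurableSpace Z] {n : ℕ} (P : Measure Z) (ℓ : Z → ℝ)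
    (S : Fin n → Z) (A : Set Z) : ℝ :=
  (∑ j ∈ Finset.univ.filter (fun j => S j ∈ A),
    condAvg P (fun z => |ℓ z - ℓ (S j)|) A) / (cnt S A : ℝ)

/-!
Write `pᵢ = P(Zᵢ)` and `qᵢ = nᵢ / n`. Each count `nᵢ` is binomial, and the moment bound
`exp t - 1 ≤ t + t²` on `[0, 1]` turns Chernoff's inequality into
`qᵢ - pᵢ ≤ 2 √(pᵢ L / n) + L / n`, failing with probability at most `e^{-L}`; a union bound over the
`K` regions with `L = log (2K/δ)` costs at most `δ / 2`.

On the event where all these deviation bounds hold the estimate is deterministic. On an occupied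
region the loss is at most the local empirical loss plus `εᵢ`, and it is at most `C` everywhere, so
`∫_{Zᵢ} ℓ ≤ qᵢ (F(Sᵢ) + εᵢ) + C (pᵢ - qᵢ)⁺`; unoccupied regions cost `C pᵢ`. Since both `p` and
`q` sum to one, the total excess mass equals `∑_{i ∈ T_S} (qᵢ - pᵢ)⁺`, which Cauchy–Schwarz
(`∑ √pᵢ ≤ √|T_S|`) bounds by `2 √(|T_S| L / n) + |T_S| L / n`.
-/

open Real Function ProbabilityTheory
open scoped Classical

lemma Real.exp_sub_one_le_add_sq {x : ℝ} (hx : |x| ≤ 1) : exp x - 1 ≤ x + x ^ 2 := by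
  linarith [le_abs_self (exp x - 1 - x), abs_exp_sub_one_sub_id_le hx]

lemma Real.exists_mem_Icc_le_mul_sub_mul_sq {a L : ℝ} (ha : 0 ≤ a) (hL : 0 ≤ L) :
    ∃ t ∈ Set.Icc (0 : ℝ) 1, L ≤ t * (2 * √(a * L) + L) - a * t ^ 2 := by
  rcases le_total L a with hLa | haL
  · -- the unconstrained optimum `t = √(L / a)` lies in `[0, 1]`
    refine ⟨√(L / a), ⟨sqrt_nonneg _, sqrt_le_one.mpr (div_le_one_of_le₀ hLa ha)⟩, ?_⟩
    have hsq : a * √(L / a) ^ 2 = L := by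
      rw [sq_sqrt (div_nonneg hL ha)]
      rcases ha.eq_or_lt with rfl | ha'
      · linarith
      · field_simp
    have hcross : √(L / a) * √(a * L) = L := by
      rw [← sqrt_mul (div_nonneg hL ha), show L / a * (a * L) = (a * √(L / a) ^ 2) * L by
        rw [sq_sqrt (div_nonneg hL ha)]; ring, hsq, ← sq, sqrt_sq hL]
    nlinarith [mul_nonneg (sqrt_nonneg (L / a)) hL]
  · refine ⟨1, ⟨zero_le_one, le_rfl⟩, ?_⟩
    have : a ≤ √(a * L) := le_sqrt_of_sq_le (by nlinarith)
    nlinarith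

lemma cnt_eq_sum_ite {Z : Type*} {n : ℕ} (S : Fin n → Z) (A : Set Z) :
    (cnt S A : ℝ) = ∑ j, if S j ∈ A then (1 : ℝ) else 0 := by
  rw [cnt, Finset.card_filter]
  push_cast
  rfl

lemma cnt_le {Z : Type*} {n : ℕ} (S : Fin n → Z) (A : Set Z) : cnt S A ≤ n :=
  (Finset.card_filter_le _ _).trans_eq (Finset.card_fin n)

lemma measurable_cnt {Z : Type*} [MeasurableSpace Z] {n : ℕ} {A : Set Z} (hA : MeasurableSet A) :
    Measurable fun S : Fin n → Z => (cnt S A : ℝ) := by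
  simp only [cnt_eq_sum_ite]
  exact Finset.measurable_sum _ fun j _ =>
    Measurable.ite (measurable_pi_apply j hA) measurable_const measurable_const

lemma integral_ite_mem_const_one {Z : Type*} [MeasurableSpace Z] (P : Measure Z)
    [IsProbabilityMeasure P] {A : Set Z} (hA : MeasurableSet A) (c : ℝ) :
    ∫ z, (if z ∈ A then c else 1) ∂P = P.real A * c + (1 - P.real A) := by
  have : (fun z => if z ∈ A then c else 1) = fun z => A.indicator (fun _ => c - 1) z + 1 := by
    funext z
    by_cases hz : z ∈ A <;> simp [hz]
  rw [this, integral_add ((integrable_const _).indicator hA) (integrable_const 1),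
    integral_indicator_const _ hA, integral_const, probReal_univ]
  simp only [smul_eq_mul]
  ring

lemma integral_exp_mul_cnt {Z : Type*} [MeasurableSpace Z] (P : Measure Z) [IsProbabilityMeasure P]
    {n : ℕ} {A : Set Z} (hA : MeasurableSet A) (t : ℝ) :
    ∫ S, exp (t * cnt S A) ∂(Measure.pi fun _ : Fin n => P)
      = (P.real A * exp t + (1 - P.real A)) ^ n := by
  have : (fun S : Fin n → Z => exp (t * cnt S A))
      = fun S => ∏ j, (if S j ∈ A then exp t else 1) := by
    funext S
    rw [cnt_eq_sum_ite, Finset.mul_sum, exp_sum]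
    congr 1
    funext j
    by_cases hj : S j ∈ A <;> simp [hj]
  rw [this, integral_fintype_prod_eq_pow (fun z => if z ∈ A then exp t else 1),
    integral_ite_mem_const_one P hA, Fintype.card_fin]

lemma integral_exp_mul_cnt_le {Z : Type*} [MeasurableSpace Z] (P : Measure Z)
    [IsProbabilityMeasure P] {n : ℕ} {A : Set Z} (hA : MeasurableSet A) {t : ℝ}
    (ht : t ∈ Set.Icc (0 : ℝ) 1) :
    ∫ S, exp (t * cnt S A) ∂(Measure.pi fun _ : Fin n => P)
      ≤ exp (n * P.real A * (t + t ^ 2)) := by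
  set p := P.real A
  have hp : p ∈ Set.Icc (0 : ℝ) 1 := ⟨measureReal_nonneg, measureReal_le_one⟩
  have hbase : p * exp t + (1 - p) ≤ exp (p * (t + t ^ 2)) := calc
    p * exp t + (1 - p) = 1 + p * (exp t - 1) := by ring
    _ ≤ 1 + p * (t + t ^ 2) := by
      gcongr
      exact exp_sub_one_le_add_sq (abs_le.mpr ⟨by linarith [ht.1], ht.2⟩)
    _ ≤ exp (p * (t + t ^ 2)) := by linarith [add_one_le_exp (p * (t + t ^ 2))]
  rw [integral_exp_mul_cnt P hA, mul_assoc, exp_nat_mul]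
  exact pow_le_pow_left₀ (by nlinarith [hp.1, hp.2, exp_pos t]) hbase n

lemma measure_cnt_ge_le {Z : Type*} [MeasurableSpace Z] (P : Measure Z) [IsProbabilityMeasure P]
    {n : ℕ} {A : Set Z} (hA : MeasurableSet A) {L : ℝ} (hL : 0 ≤ L) :
    (Measure.pi fun _ : Fin n => P)
      {S | n * P.real A + 2 * √(n * P.real A * L) + L ≤ cnt S A} ≤ ENNReal.ofReal (exp (-L)) := by
  set μ := Measure.pi fun _ : Fin n => P
  set a := n * P.real A
  obtain ⟨t, ht, hexponent⟩ := exists_mem_Icc_le_mul_sub_mul_sq (a := a) (by positivity) hL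
  have hint : Integrable (fun S => exp (t * cnt S A)) μ :=
    Integrable.of_bound ((measurable_cnt hA).const_mul t).exp.aestronglyMeasurable (exp (t * n))
      (Filter.Eventually.of_forall fun S => by
        rw [norm_of_nonneg (exp_pos _).le]
        exact exp_le_exp.mpr (mul_le_mul_of_nonneg_left (mod_cast cnt_le S A) ht.1))
  have hchernoff := measure_ge_le_exp_mul_mgf (μ := μ)
    (X := fun S => (cnt S A : ℝ)) (a + 2 * √(a * L) + L) ht.1 hint
  rw [← ENNReal.ofReal_toReal (measure_ne_top μ _)]
  refine ENNReal.ofReal_le_ofReal (hchernoff.trans ?_)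
  calc exp (-t * (a + 2 * √(a * L) + L)) * mgf (fun S => (cnt S A : ℝ)) μ t
      ≤ exp (-t * (a + 2 * √(a * L) + L)) * exp (a * (t + t ^ 2)) :=
        mul_le_mul_of_nonneg_left (integral_exp_mul_cnt_le P hA ht) (exp_pos _).le
    _ ≤ exp (-L) := by
        rw [← exp_add]
        exact exp_le_exp.mpr (by nlinarith)

section Partition

variable {Z : Type*} {K n : ℕ} {Zpart : Fin K → Set Z}

lemma filter_mem_eq_empty_of_notMem_Tset {S : Fin n → Z} {i : Fin K} (hi : i ∉ Tset S Zpart) :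
    Finset.univ.filter (fun j => S j ∈ Zpart i) = ∅ := by
  simpa [Tset, cnt] using hi

lemma sum_Tset_sum_filter_mem (hdisj : Pairwise (Disjoint on Zpart))
    (hcover : ⋃ i, Zpart i = Set.univ) (S : Fin n → Z) (g : Fin n → ℝ) :
    ∑ i ∈ Tset S Zpart, ∑ j ∈ Finset.univ.filter (fun j => S j ∈ Zpart i), g j = ∑ j, g j := by
  rw [Finset.sum_subset (Finset.subset_univ _) fun i _ hi => by
    rw [filter_mem_eq_empty_of_notMem_Tset hi, Finset.sum_empty]]
  simp only [Finset.sum_filter]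
  rw [Finset.sum_comm]
  refine Finset.sum_congr rfl fun j _ => ?_
  obtain ⟨i₀, hi₀⟩ := Set.mem_iUnion.mp (hcover ▸ Set.mem_univ (S j))
  rw [Finset.sum_eq_single i₀ (fun i _ hi => if_neg fun h =>
      Set.disjoint_left.mp (hdisj hi) h hi₀) (by simp), if_pos hi₀]

lemma sum_Tset_cnt (hdisj : Pairwise (Disjoint on Zpart)) (hcover : ⋃ i, Zpart i = Set.univ)
    (S : Fin n → Z) : ∑ i ∈ Tset S Zpart, (cnt S (Zpart i) : ℝ) = n := by
  simpa [cnt] using sum_Tset_sum_filter_mem hdisj hcover S fun _ => 1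

lemma sum_Tset_mul_empLossIn (hdisj : Pairwise (Disjoint on Zpart))
    (hcover : ⋃ i, Zpart i = Set.univ) (S : Fin n → Z) (f : Z → ℝ) :
    ∑ i ∈ Tset S Zpart, (cnt S (Zpart i) : ℝ) / n * empLossIn f S (Zpart i) = empLoss f S := by
  have hcnt : ∀ i ∈ Tset S Zpart, (cnt S (Zpart i) : ℝ) ≠ 0 := fun i hi =>
    by exact_mod_cast (Finset.mem_filter.mp hi).2.ne'
  rw [empLoss, ← sum_Tset_sum_filter_mem hdisj hcover S (fun j => f (S j)), Finset.sum_div]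
  refine Finset.sum_congr rfl fun i hi => ?_
  rw [empLossIn]
  field_simp [hcnt i hi]

lemma sum_measureReal_eq_one [MeasurableSpace Z] (P : Measure Z)
    [IsProbabilityMeasure P] (hmeas : ∀ i, MeasurableSet (Zpart i))
    (hdisj : Pairwise (Disjoint on Zpart)) (hcover : ⋃ i, Zpart i = Set.univ) :
    ∑ i, P.real (Zpart i) = 1 := by
  rw [← measureReal_biUnion_finset (fun i _ j _ hij => hdisj hij) fun i _ => hmeas i]
  simp [hcover]

end Partition

section Robustness

variable {Z : Type*} {n : ℕ} {f : Z → ℝ} {C : ℝ}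

lemma epsSup_nonneg (f : Z → ℝ) (S : Fin n → Z) (A : Set Z) : 0 ≤ epsSup f S A :=
  Real.sSup_nonneg fun _ ⟨_, _, _, _, hx⟩ => hx ▸ abs_nonneg _

lemma abs_sub_le_epsSup (hf0 : ∀ z, 0 ≤ f z) (hfC : ∀ z, f z ≤ C) {S : Fin n → Z} {A : Set Z}
    {j : Fin n} (hj : S j ∈ A) {z : Z} (hz : z ∈ A) : |f (S j) - f z| ≤ epsSup f S A := by
  refine le_csSup ⟨C, ?_⟩ ⟨j, hj, z, hz, rfl⟩
  rintro _ ⟨j, -, z, -, rfl⟩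
  exact abs_sub_le_iff.mpr ⟨by linarith [hf0 z, hfC (S j)], by linarith [hf0 (S j), hfC z]⟩

lemma empLossIn_nonneg (hf0 : ∀ z, 0 ≤ f z) (S : Fin n → Z) (A : Set Z) :
    0 ≤ empLossIn f S A :=
  div_nonneg (Finset.sum_nonneg fun _ _ => hf0 _) (Nat.cast_nonneg _)

lemma le_empLossIn_add_epsSup (hf0 : ∀ z, 0 ≤ f z) (hfC : ∀ z, f z ≤ C) {S : Fin n → Z}
    {A : Set Z} (hA : 0 < cnt S A) {z : Z} (hz : z ∈ A) :
    f z ≤ empLossIn f S A + epsSup f S A := by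
  have hpos : (0 : ℝ) < cnt S A := by exact_mod_cast hA
  have hsum : ∑ j ∈ Finset.univ.filter (fun j => S j ∈ A), f z
      ≤ ∑ j ∈ Finset.univ.filter (fun j => S j ∈ A), (f (S j) + epsSup f S A) :=
    Finset.sum_le_sum fun j hj => by
      linarith [neg_abs_le (f (S j) - f z),
        abs_sub_le_epsSup hf0 hfC (Finset.mem_filter.mp hj).2 hz]
  rw [Finset.sum_add_distrib, Finset.sum_const, Finset.sum_const, nsmul_eq_mul, nsmul_eq_mul,
    ← cnt] at hsum
  rw [empLossIn, div_add' _ _ _ hpos.ne', le_div_iff₀ hpos]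
  linarith

end Robustness

lemma mul_le_mul_add_max_sub_mul {p q m a c : ℝ} (hq : 0 ≤ q) (hm : 0 ≤ m) (hma : m ≤ a)
    (hmc : m ≤ c) : p * m ≤ q * a + max (p - q) 0 * c := by
  rcases le_total p q with hpq | hqp
  · rw [max_eq_right (sub_nonpos.mpr hpq)]
    nlinarith
  · rw [max_eq_left (sub_nonneg.mpr hqp)]
    nlinarith

lemma Finset.sum_max_sub_add_sum_compl {ι : Type*} [Fintype ι] [DecidableEq ι] (T : Finset ι)
    {p q : ι → ℝ} (hpq : ∑ i, p i = ∑ i ∈ T, q i) :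
    ∑ i ∈ T, max (p i - q i) 0 + ∑ i ∈ Tᶜ, p i = ∑ i ∈ T, max (q i - p i) 0 := by
  have hmax : ∀ i, max (p i - q i) 0 = max (q i - p i) 0 + (p i - q i) := fun i => by
    rcases le_total (p i) (q i) with h | h
    · rw [max_eq_right (by linarith), max_eq_left (by linarith)]; ring
    · rw [max_eq_left (by linarith), max_eq_right (by linarith)]; ring
  simp only [hmax, Finset.sum_add_distrib, Finset.sum_sub_distrib]
  linarith [Finset.sum_add_sum_compl T p]

lemma Finset.sum_max_sub_le_of_le_sqrt {ι : Type*} (T : Finset ι) {p q : ι → ℝ}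
    (hp0 : ∀ i, 0 ≤ p i) (hp1 : ∑ i ∈ T, p i ≤ 1) {ε : ℝ} (hε : 0 ≤ ε)
    (hdev : ∀ i ∈ T, q i - p i ≤ 2 * √(p i * ε) + ε) :
    ∑ i ∈ T, max (q i - p i) 0 ≤ 2 * √(#T * ε) + #T * ε := by
  have hCS : ∑ i ∈ T, √(p i) ≤ √(#T : ℝ) := by
    have := Real.sum_sqrt_mul_sqrt_le T hp0 fun _ => zero_le_one
    simp only [sqrt_one, mul_one, Finset.sum_const, nsmul_eq_mul] at this
    exact this.trans (mul_le_of_le_one_left (sqrt_nonneg _) (sqrt_le_one.mpr hp1))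
  calc ∑ i ∈ T, max (q i - p i) 0 ≤ ∑ i ∈ T, (2 * √(p i * ε) + ε) :=
        Finset.sum_le_sum fun i hi => max_le (hdev i hi) (by positivity)
    _ = 2 * (∑ i ∈ T, √(p i)) * √ε + #T * ε := by
        simp [Finset.sum_add_distrib, Finset.mul_sum, Finset.sum_mul, sqrt_mul (hp0 _), mul_assoc]
    _ ≤ 2 * √(#T * ε) + #T * ε := by
        rw [sqrt_mul (Nat.cast_nonneg _), ← mul_assoc]
        gcongr

lemma setIntegral_le_measureReal_mul {Z : Type*} [MeasurableSpace Z] {P : Measure Z}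
    [IsFiniteMeasure P] {f : Z → ℝ} (hf : Integrable f P) {A : Set Z} (hA : MeasurableSet A)
    {m : ℝ} (hfm : ∀ z ∈ A, f z ≤ m) : ∫ z in A, f z ∂P ≤ P.real A * m := by
  calc ∫ z in A, f z ∂P ≤ ∫ _ in A, m ∂P :=
        setIntegral_mono_on hf.integrableOn (integrable_const m).integrableOn hA hfm
    _ = P.real A * m := by rw [setIntegral_const, smul_eq_mul]

lemma div_sub_le_of_le_add_sqrt {x m p L : ℝ} (hm : 0 < m)
    (h : x ≤ m * p + 2 * √(m * p * L) + L) : x / m - p ≤ 2 * √(p * (L / m)) + L / m := by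
  have hsqrt : √(m * p * L) = m * √(p * (L / m)) := by
    rw [show m * p * L = m ^ 2 * (p * (L / m)) by field_simp, sqrt_mul (sq_nonneg m),
      sqrt_sq hm.le]
  rw [sub_le_iff_le_add, div_le_iff₀ hm]
  have : (2 * √(p * (L / m)) + L / m + p) * m = m * p + 2 * (m * √(p * (L / m))) + L := by
    field_simp
    ring
  linarith

lemma mul_two_mul_sqrt_add_le {C t : ℝ} (hC : 0 ≤ C) (ht : 0 ≤ t) :
    C * (2 * √t + t) ≤ C * (√2 + 1) * √t + 2 * C * t := by
  have h2 : 2 ≤ √2 + 1 := by linarith [one_lt_sqrt_two]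
  nlinarith [mul_le_mul_of_nonneg_right h2 (mul_nonneg hC (sqrt_nonneg t)), mul_nonneg hC ht]

section Deterministic

variable {Z : Type*} [MeasurableSpace Z] (P : Measure Z) [IsProbabilityMeasure P] {K : ℕ}
  {Zpart : Fin K → Set Z} (hmeas : ∀ i, MeasurableSet (Zpart i))
  (hdisj : Pairwise (Disjoint on Zpart)) (hcover : ⋃ i, Zpart i = Set.univ)
  {n : ℕ} (hn : 0 < n) {f : Z → ℝ} (hfmeas : Measurable f) (hf0 : ∀ z, 0 ≤ f z) {C : ℝ}
  (hfC : ∀ z, f z ≤ C) (S : Fin n → Z)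
include hmeas hdisj hcover hn hfmeas hf0 hfC

theorem integral_le_of_cnt_div_sub_le {ε : ℝ} (hε : 0 ≤ ε)
    (hdev : ∀ i ∈ Tset S Zpart,
      (cnt S (Zpart i) : ℝ) / n - P.real (Zpart i) ≤ 2 * √(P.real (Zpart i) * ε) + ε) :
    ∫ z, f z ∂P ≤ C * (2 * √(#(Tset S Zpart) * ε) + #(Tset S Zpart) * ε) + empLoss f S
      + ∑ i ∈ Tset S Zpart, (cnt S (Zpart i) : ℝ) / n * epsSup f S (Zpart i) := by
  set T := Tset S Zpart
  set p := fun i => P.real (Zpart i)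
  set q := fun i => (cnt S (Zpart i) : ℝ) / n
  set a := fun i => empLossIn f S (Zpart i) + epsSup f S (Zpart i)
  obtain ⟨z₀⟩ := nonempty_of_isProbabilityMeasure P
  have hC : 0 ≤ C := (hf0 z₀).trans (hfC z₀)
  have hf : Integrable f P := Integrable.of_bound hfmeas.aestronglyMeasurable C
    (Filter.Eventually.of_forall fun z => by rw [Real.norm_of_nonneg (hf0 z)]; exact hfC z)
  have hregion : ∀ i ∈ T, ∫ z in Zpart i, f z ∂P ≤ q i * a i + max (p i - q i) 0 * C :=
    fun i hi => (setIntegral_le_measureReal_mul hf (hmeas i) (m := min (a i) C) fun z hz =>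
      le_min (le_empLossIn_add_epsSup hf0 hfC (Finset.mem_filter.mp hi).2 hz) (hfC z)).trans
      (mul_le_mul_add_max_sub_mul (by positivity)
        (le_min (add_nonneg (empLossIn_nonneg hf0 _ _) (epsSup_nonneg _ _ _)) hC)
        (min_le_left _ _) (min_le_right _ _))
  have hp1 : ∑ i, p i = 1 := sum_measureReal_eq_one P hmeas hdisj hcover
  have hq1 : ∑ i ∈ T, q i = 1 := by
    rw [← Finset.sum_div, sum_Tset_cnt hdisj hcover, div_self (Nat.cast_pos.mpr hn).ne']
  have hexcess : ∑ i ∈ T, max (p i - q i) 0 + ∑ i ∈ Tᶜ, p i ≤ 2 * √(#T * ε) + #T * ε :=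
    (Finset.sum_max_sub_add_sum_compl T (hp1.trans hq1.symm)).trans_le
      (Finset.sum_max_sub_le_of_le_sqrt T (fun _ => measureReal_nonneg)
        ((Finset.sum_le_univ_sum_of_nonneg fun _ => measureReal_nonneg).trans_eq hp1) hε hdev)
  calc ∫ z, f z ∂P = ∑ i ∈ T, ∫ z in Zpart i, f z ∂P + ∑ i ∈ Tᶜ, ∫ z in Zpart i, f z ∂P := by
        rw [Finset.sum_add_sum_compl, ← setIntegral_univ, ← hcover,
          integral_iUnion hmeas hdisj hf.integrableOn, tsum_fintype]
    _ ≤ ∑ i ∈ T, (q i * a i + max (p i - q i) 0 * C) + ∑ i ∈ Tᶜ, p i * C :=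
        add_le_add (Finset.sum_le_sum hregion) (Finset.sum_le_sum fun i _ =>
          setIntegral_le_measureReal_mul hf (hmeas i) fun z _ => hfC z)
    _ = C * (∑ i ∈ T, max (p i - q i) 0 + ∑ i ∈ Tᶜ, p i) + ∑ i ∈ T, q i * empLossIn f S (Zpart i)
          + ∑ i ∈ T, q i * epsSup f S (Zpart i) := by
        simp only [a, mul_add, Finset.sum_add_distrib, Finset.mul_sum, mul_comm _ C]
        ring
    _ ≤ _ := by
        rw [sum_Tset_mul_empLossIn hdisj hcover]
        gcongr

theorem integral_le_of_forall_cnt_lt {L : ℝ} (hL : 0 ≤ L)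
    (hgood : ∀ i, (cnt S (Zpart i) : ℝ)
      < n * P.real (Zpart i) + 2 * √(n * P.real (Zpart i) * L) + L) :
    ∫ z, f z ∂P ≤ C * (√2 + 1) * √(#(Tset S Zpart) * L / n) + 2 * C * #(Tset S Zpart) * L / n
      + empLoss f S + ∑ i ∈ Tset S Zpart, (cnt S (Zpart i) : ℝ) / n * epsSup f S (Zpart i) := by
  obtain ⟨z₀⟩ := nonempty_of_isProbabilityMeasure P
  have hnR : (0 : ℝ) < n := Nat.cast_pos.mpr hn
  have hcoef := mul_two_mul_sqrt_add_le ((hf0 z₀).trans (hfC z₀))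
    (by positivity : (0 : ℝ) ≤ #(Tset S Zpart) * L / n)
  calc ∫ z, f z ∂P ≤ C * (2 * √(#(Tset S Zpart) * (L / n)) + #(Tset S Zpart) * (L / n))
        + empLoss f S + ∑ i ∈ Tset S Zpart, (cnt S (Zpart i) : ℝ) / n * epsSup f S (Zpart i) :=
        integral_le_of_cnt_div_sub_le P hmeas hdisj hcover hn hfmeas hf0 hfC S
          (div_nonneg hL hnR.le) fun i _ => div_sub_le_of_le_add_sqrt hnR (hgood i).le
    _ ≤ _ := by
        rw [← mul_div_assoc]
        linear_combination hcoef

end Deterministic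

lemma measure_exists_cnt_ge_le {Z : Type*} [MeasurableSpace Z] (P : Measure Z)
    [IsProbabilityMeasure P] {K : ℕ} {Zpart : Fin K → Set Z}
    (hmeas : ∀ i, MeasurableSet (Zpart i)) {n : ℕ} {L : ℝ} (hL : 0 ≤ L) :
    (Measure.pi fun _ : Fin n => P)
      {S | ∃ i, n * P.real (Zpart i) + 2 * √(n * P.real (Zpart i) * L) + L ≤ cnt S (Zpart i)}
      ≤ K * ENNReal.ofReal (exp (-L)) := by
  rw [Set.ofPred_exists]
  refine (measure_iUnion_fintype_le _ _).trans ?_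
  refine (Finset.sum_le_sum fun i _ => measure_cnt_ge_le P (hmeas i) hL).trans ?_
  simp

lemma ofReal_one_sub_le_measure_of_compl_subset {Ω : Type*} [MeasurableSpace Ω] {μ : Measure Ω}
    [IsProbabilityMeasure μ] {B G : Set Ω} {δ : ℝ} (hδ : 0 ≤ δ) (hB : μ B ≤ ENNReal.ofReal δ)
    (hBG : Bᶜ ⊆ G) : ENNReal.ofReal (1 - δ) ≤ μ G := calc
  ENNReal.ofReal (1 - δ) = 1 - ENNReal.ofReal δ := by rw [ENNReal.ofReal_sub 1 hδ, ENNReal.ofReal_one]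
  _ ≤ 1 - μ B := tsub_le_tsub_left hB 1
  _ ≤ μ Bᶜ := tsub_le_iff_left.mpr (measure_univ (μ := μ) ▸ measure_univ_le_add_compl B)
  _ ≤ μ G := measure_mono hBG

theorem statement5_general {Z : Type*} [MeasurableSpace Z] (P : Measure Z) [IsProbabilityMeasure P]
    {K : ℕ} (Zpart : Fin K → Set Z)
    (hZmeas : ∀ i, MeasurableSet (Zpart i))
    (hZdisj : ∀ i j, i ≠ j → Disjoint (Zpart i) (Zpart j))
    (hZcover : (⋃ i, Zpart i) = Set.univ)
    {n : ℕ} (hn : 0 < n)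
    (ℓ : (Fin n → Z) → Z → ℝ)
    (hℓmeas : ∀ S, Measurable (ℓ S))
    (hℓnonneg : ∀ S z, 0 ≤ ℓ S z)
    (hℓbdd : ∀ S, BddAbove (Set.range (ℓ S)))
    (δ : ℝ) (hδ : 0 < δ) :
    ENNReal.ofReal (1 - δ) ≤
      (Measure.pi fun _ : Fin n => P)
        {S | ∫ z, ℓ S z ∂P ≤
          (⨆ z, ℓ S z) * (Real.sqrt 2 + 1) *
              Real.sqrt (((Tset S Zpart).card : ℝ) * Real.log (2 * K / δ) / n)
            + 2 * (⨆ z, ℓ S z) * ((Tset S Zpart).card : ℝ) * Real.log (2 * K / δ) / n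
            + empLoss (ℓ S) S
            + ∑ i ∈ Tset S Zpart, ((cnt S (Zpart i) : ℝ) / n) * epsSup (ℓ S) S (Zpart i)} := by
  rcases le_or_gt 1 δ with hδ1 | hδ1
  · rw [ENNReal.ofReal_eq_zero.mpr (by linarith)]
    exact zero_le
  have hK : (1 : ℝ) ≤ K := by
    obtain ⟨z⟩ := nonempty_of_isProbabilityMeasure P
    obtain ⟨i, -⟩ := Set.mem_iUnion.mp (hZcover ▸ Set.mem_univ z)
    exact Nat.one_le_cast.mpr i.pos
  have hL : 0 ≤ log (2 * K / δ) := log_nonneg (by rw [le_div_iff₀ hδ]; linarith)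
  refine ofReal_one_sub_le_measure_of_compl_subset hδ.le ((measure_exists_cnt_ge_le P hZmeas hL).trans ?_)
    fun S hS => ?_
  · rw [exp_neg, exp_log (div_pos (by linarith) hδ), inv_div, ← ENNReal.ofReal_natCast,
      ← ENNReal.ofReal_mul (Nat.cast_nonneg _)]
    exact ENNReal.ofReal_le_ofReal (by field_simp; linarith)
  · simp only [Set.mem_compl_iff, Set.mem_ofPred_eq, not_exists, not_le] at hS
    exact integral_le_of_forall_cnt_lt P hZmeas (fun i j hij => hZdisj i j hij) hZcover hn
      (hℓmeas S) (hℓnonneg S) (fun z => le_ciSup (hℓbdd S) z) S hL hS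

/-- Local Robustness generalization bound. -/
theorem statement5 {Z : Type*} [MeasurableSpace Z] (P : Measure Z) [IsProbabilityMeasure P]
    {K : ℕ} (Zpart : Fin K → Set Z)
    (hZmeas : ∀ i, MeasurableSet (Zpart i))
    (hZdisj : ∀ i j, i ≠ j → Disjoint (Zpart i) (Zpart j))
    (hZcover : (⋃ i, Zpart i) = Set.univ)
    (hZpos : ∀ i, 0 < P (Zpart i))
    {n : ℕ} (hn : 0 < n)
    (ℓ : (Fin n → Z) → Z → ℝ)
    (hℓmeas : ∀ S, Measurable (ℓ S))
    (hℓnonneg : ∀ S z, 0 ≤ ℓ S z)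
    (hℓbdd : ∀ S, BddAbove (Set.range (ℓ S)))
    (δ : ℝ) (hδ : 0 < δ) :
    ENNReal.ofReal (1 - δ) ≤
      (Measure.pi fun _ : Fin n => P)
        {S | ∫ z, ℓ S z ∂P ≤
          (⨆ z, ℓ S z) * (Real.sqrt 2 + 1) *
              Real.sqrt (((Tset S Zpart).card : ℝ) * Real.log (2 * K / δ) / n)
            + 2 * (⨆ z, ℓ S z) * ((Tset S Zpart).card : ℝ) * Real.log (2 * K / δ) / n
            + empLoss (ℓ S) S
            + ∑ i ∈ Tset S Zpart, ((cnt S (Zpart i) : ℝ) / n) * epsSup (ℓ S) S (Zpart i)} :=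
  statement5_general P Zpart hZmeas hZdisj hZcover hn ℓ hℓmeas hℓnonneg hℓbdd δ hδ
end

section
/- (Lower bound for a model family.) Let \pi be a probability measure on a measurable space H of models with a jointly measurable, bounded, nonnegative loss \ell : H \times Z \to \mathbb{R}. Set \bar{a}_i = E_{h \sim \pi}[a_i(h)] for each i \in [K], \hat{a} = \max_{j \in [K]} \bar{a}_j, and \beta = 2 \sum_{j=1}^{K} P(Z_j) \bar{a}_j^2. If \beta > 0, then for every \delta \ge \exp(-n\beta/(2\hat{a}^2)), with probability at least 1 - \delta over n i.i.d. samples S from P: E_{h \sim \pi}[F(P,h)] \ge \left( \sqrt{ \sum_{i \in T_S} (n_i/n) \bar{a}_i + \hat{a} \ln(1/\delta)/n } - \sqrt{ \hat{a} \ln(1/\delta)/n } \right)^2. -/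
open MeasureTheory Finset

open ProbabilityTheory Function

/-!
Averaging over `π` replaces every model by the step function `f` equal to `ā_i` on `Z_i`: the
left-hand side `E_π F(P, h)` is `m = E_P f`, and `∑_{i ∈ T_S} (n_i / n) ā_i` is the sample mean of
`f`. As `0 ≤ f ≤ â`, the variance proxy `V = E f² = β / 2` is at most `â m`, and the bound
`e^x ≤ 1 + x + x²` for `|x| ≤ 1` gives a Bernstein-type Chernoff bound: with probability at least
`1 - δ` the sample mean is below `m + 2 √(m c)`, where `c = â ln(1/δ) / n`. This is the claim after
completing the square. The lower bound on `δ` says `ln(1/δ) / n ≤ V / â²`, which is exactly what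
makes an admissible Chernoff parameter (one with `s â ≤ 1`) good enough.
-/

section RealInequalities

open Real

lemma sq_sqrt_add_sub_sqrt_le {x m c : ℝ} (hx : 0 ≤ x) (hm : 0 ≤ m) (hc : 0 ≤ c)
    (h : x ≤ m + 2 * √(m * c)) : (√(x + c) - √c) ^ 2 ≤ m := by
  have hsum : √(x + c) ≤ √m + √c := by
    rw [Real.sqrt_le_left (by positivity), add_sq, Real.sq_sqrt hm, Real.sq_sqrt hc, mul_assoc,
      ← Real.sqrt_mul hm]
    linarith
  have hle : √c ≤ √(x + c) := Real.sqrt_le_sqrt (by linarith)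
  calc (√(x + c) - √c) ^ 2 ≤ √m ^ 2 := pow_le_pow_left₀ (by linarith) (by linarith) 2
    _ = m := Real.sq_sqrt hm

lemma exists_chernoff_param {b m V L : ℝ} (hb : 0 < b) (hL : 0 ≤ L) (hVm : V ≤ b * m)
    (hLV : L * b ^ 2 ≤ V) :
    ∃ s, 0 ≤ s ∧ s * b ≤ 1 ∧ L ≤ 2 * s * √(m * (b * L)) - s ^ 2 * V := by
  rcases (show 0 ≤ V by nlinarith [pow_pos hb 2]).eq_or_lt with hV | hV
  · refine ⟨0, le_rfl, by simp, ?_⟩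
    subst hV
    nlinarith [pow_pos hb 2]
  set q := √(m * (b * L))
  have hm : 0 ≤ m := nonneg_of_mul_nonneg_right (hV.le.trans hVm) hb
  have hq : q ^ 2 = m * (b * L) := Real.sq_sqrt (by positivity)
  rcases le_or_gt (q * b) V with hqb | hqb
  · -- `s = q / V` is the unconstrained maximiser of `2 s q - s² V`
    refine ⟨q / V, by positivity, by rwa [div_mul_eq_mul_div, div_le_one hV], ?_⟩
    have : 2 * (q / V) * q - (q / V) ^ 2 * V = q ^ 2 / V := by field_simp; ring
    rw [this, hq, le_div_iff₀ hV]
    nlinarith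
  · refine ⟨1 / b, by positivity, by field_simp; rfl, ?_⟩
    have : 2 * (1 / b) * q - (1 / b) ^ 2 * V = (2 * q * b - V) / b ^ 2 := by field_simp
    rw [this, le_div_iff₀ (by positivity)]
    linarith

lemma log_one_div_mul_sq_le_of_exp_neg_div_le {x a δ : ℝ} (hδ1 : δ < 1)
    (h : exp (-x / (2 * a ^ 2)) ≤ δ) : a ≠ 0 ∧ 0 < x ∧ log (1 / δ) * a ^ 2 ≤ x / 2 := by
  have hδ0 : 0 < δ := (exp_pos _).trans_le h
  have hpos : 0 < x / (2 * a ^ 2) := by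
    have := exp_lt_one_iff.1 (h.trans_lt hδ1)
    rw [neg_div] at this
    linarith
  have ha : a ≠ 0 := fun ha => by simp [ha] at hpos
  refine ⟨ha, (div_pos_iff_of_pos_right (by positivity)).1 hpos, ?_⟩
  have hlog := (le_log_iff_exp_le hδ0).2 h
  rw [neg_div] at hlog
  rw [one_div, log_inv, ← le_div_iff₀ (by positivity), div_div]
  linarith

end RealInequalities

section Chernoff

open Real

variable {Ω : Type*} [MeasurableSpace Ω] {μ : Measure Ω}

lemma mgf_sum_pi [SigmaFinite μ] {ι : Type*} [Fintype ι] (f : Ω → ℝ) (s : ℝ) :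
    mgf (fun S : ι → Ω => ∑ j, f (S j)) (Measure.pi fun _ => μ) s
      = mgf f μ s ^ Fintype.card ι := by
  simp only [mgf, mul_sum, exp_sum]
  exact integral_fintype_prod_eq_pow (ι := ι) (μ := μ) (fun ω => exp (s * f ω))

lemma mgf_le_exp_of_abs_mul_le_one [IsProbabilityMeasure μ] {X : Ω → ℝ}
    (hX : AEStronglyMeasurable X μ) {b s : ℝ} (hXb : ∀ ω, |X ω| ≤ b) (hs : |s| * b ≤ 1) :
    mgf X μ s ≤ exp (s * μ[X] + s ^ 2 * ∫ ω, X ω ^ 2 ∂μ) := by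
  have hX_int : Integrable X μ := .of_bound hX b (ae_of_all _ hXb)
  have hX2_int : Integrable (fun ω => X ω ^ 2) μ :=
    .of_bound (hX.pow 2) (b ^ 2) (ae_of_all _ fun ω => by
      simpa [abs_pow] using pow_le_pow_left₀ (abs_nonneg _) (hXb ω) 2)
  have hsX : ∀ ω, |s * X ω| ≤ 1 := fun ω => by
    rw [abs_mul]; exact (mul_le_mul_of_nonneg_left (hXb ω) (abs_nonneg s)).trans hs
  have hexp_int : Integrable (fun ω => exp (s * X ω)) μ :=
    .of_bound (continuous_exp.comp_aestronglyMeasurable (hX.const_mul s)) (exp 1)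
      (ae_of_all _ fun ω => by
        rw [norm_of_nonneg (exp_pos _).le, exp_le_exp]
        exact (le_abs_self _).trans (hsX ω))
  have hpt : ∀ ω, exp (s * X ω) ≤ 1 + s * X ω + s ^ 2 * X ω ^ 2 := fun ω => by
    have := (abs_le.mp (abs_exp_sub_one_sub_id_le (hsX ω))).2
    nlinarith
  have hquad_int : Integrable (fun ω => 1 + s * X ω) μ :=
    (integrable_const 1).add (hX_int.const_mul s)
  calc mgf X μ s ≤ ∫ ω, (1 + s * X ω + s ^ 2 * X ω ^ 2) ∂μ :=
        integral_mono hexp_int (hquad_int.add (hX2_int.const_mul _)) hpt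
    _ = s * μ[X] + s ^ 2 * ∫ ω, X ω ^ 2 ∂μ + 1 := by
        rw [integral_add hquad_int (hX2_int.const_mul _),
          integral_add (integrable_const 1) (hX_int.const_mul s), integral_const_mul,
          integral_const_mul]
        simp only [integral_const, probReal_univ, smul_eq_mul, one_mul]
        ring
    _ ≤ exp (s * μ[X] + s ^ 2 * ∫ ω, X ω ^ 2 ∂μ) := add_one_le_exp _

theorem measureReal_pi_mean_ge_le_exp [IsProbabilityMeasure μ] {f : Ω → ℝ} (hf : Measurable f)
    {b : ℝ} (hb : 0 < b) (hf0 : ∀ ω, 0 ≤ f ω) (hfb : ∀ ω, f ω ≤ b)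
    {n : ℕ} (hn : 0 < n) {t : ℝ} (ht : 0 ≤ t) (htV : t * b ^ 2 ≤ n * ∫ ω, f ω ^ 2 ∂μ) :
    (Measure.pi fun _ : Fin n => μ).real
      {S | μ[f] + 2 * √(μ[f] * (b * t / n)) ≤ (∑ j, f (S j)) / n} ≤ exp (-t) := by
  set m := μ[f]
  set V := ∫ ω, f ω ^ 2 ∂μ
  set L := t / n with hL
  have hnR : (0 : ℝ) < n := by exact_mod_cast hn
  have hf_int : Integrable f μ := .of_bound hf.aestronglyMeasurable b
    (ae_of_all _ fun ω => by rw [norm_of_nonneg (hf0 ω)]; exact hfb ω)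
  have hVm : V ≤ b * m := by
    rw [← integral_const_mul]
    refine integral_mono_of_nonneg (ae_of_all _ fun ω => sq_nonneg _) (hf_int.const_mul b)
      (ae_of_all _ fun ω => ?_)
    simp only [sq]
    exact mul_le_mul_of_nonneg_right (hfb ω) (hf0 ω)
  have hLV : L * b ^ 2 ≤ V := by
    rw [hL, div_mul_eq_mul_div, div_le_iff₀ hnR]; linarith
  obtain ⟨s, hs0, hsb, hsL⟩ := exists_chernoff_param hb (by positivity) hVm hLV
  set X : (Fin n → Ω) → ℝ := fun S => ∑ j, f (S j)
  set u := m + 2 * √(m * (b * L)) with hu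
  have hX : Measurable X := Finset.measurable_sum _ fun j _ => hf.comp (measurable_pi_apply j)
  have hexp_int : Integrable (fun S => exp (s * X S)) (Measure.pi fun _ : Fin n => μ) :=
    .of_bound (continuous_exp.comp_aestronglyMeasurable (hX.const_mul s).aestronglyMeasurable)
      (exp (s * (n * b))) (ae_of_all _ fun S => by
        rw [norm_of_nonneg (exp_pos _).le, exp_le_exp]
        refine mul_le_mul_of_nonneg_left ?_ hs0
        simpa using Finset.sum_le_sum fun j (_ : j ∈ univ) => hfb (S j))
  have hmgf : mgf f μ s ≤ exp (s * m + s ^ 2 * V) :=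
    mgf_le_exp_of_abs_mul_le_one hf.aestronglyMeasurable
      (fun ω => (abs_of_nonneg (hf0 ω)).trans_le (hfb ω)) (by rwa [abs_of_nonneg hs0])
  calc (Measure.pi fun _ : Fin n => μ).real {S | m + 2 * √(m * (b * t / n)) ≤ X S / n}
      = (Measure.pi fun _ : Fin n => μ).real {S | n * u ≤ X S} := by
        simp only [le_div_iff₀ hnR, mul_div_assoc, mul_comm (n : ℝ)]
        rfl
    _ ≤ exp (-s * (n * u)) * mgf X (Measure.pi fun _ : Fin n => μ) s :=
        measure_ge_le_exp_mul_mgf _ hs0 hexp_int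
    _ ≤ exp (-s * (n * u)) * exp (s * m + s ^ 2 * V) ^ n := by
        rw [mgf_sum_pi, Fintype.card_fin]
        gcongr
        exact mgf_nonneg
    _ = exp (-(n * (2 * s * √(m * (b * L)) - s ^ 2 * V))) := by
        rw [← exp_nat_mul, ← exp_add, hu]
        congr 1
        ring
    _ ≤ exp (-t) := by
        gcongr
        calc t = n * L := by rw [hL, mul_div_cancel₀ _ hnR.ne']
          _ ≤ _ := by gcongr

lemma ofReal_one_sub_le_measure_compl [IsProbabilityMeasure μ] {s : Set Ω} {δ : ℝ}
    (hs : μ.real s ≤ δ) :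
    ENNReal.ofReal (1 - δ) ≤ μ sᶜ := by
  have : 1 ≤ μ.real s + μ.real sᶜ := by
    simpa [probReal_univ] using measureReal_union_le (μ := μ) s sᶜ
  rw [← ofReal_measureReal]
  exact ENNReal.ofReal_le_ofReal (by linarith)

end Chernoff

lemma condAvg_nonneg {Z : Type*} [MeasurableSpace Z] {P : Measure Z} {g : Z → ℝ}
    (hg : ∀ z, 0 ≤ g z) (B : Set Z) : 0 ≤ condAvg P g B :=
  div_nonneg (integral_nonneg hg) ENNReal.toReal_nonneg

-- No positivity assumption: if `P B = 0`, both sides vanish (`condAvg` is then the junk value `0`).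
lemma measureReal_mul_condAvg {Z : Type*} [MeasurableSpace Z] {P : Measure Z} [IsFiniteMeasure P]
    (g : Z → ℝ) (B : Set Z) : P.real B * condAvg P g B = ∫ z in B, g z ∂P := by
  rcases eq_or_ne (P.real B) 0 with h | h
  · rw [h, zero_mul, Measure.restrict_eq_zero.2 ((measureReal_eq_zero_iff).1 h),
      integral_zero_measure]
  · rw [condAvg, ← measureReal_def, mul_div_cancel₀ _ h]

section Partition

variable {Z ι : Type*} [Fintype ι]

noncomputable def stepFun (A : ι → Set Z) (c : ι → ℝ) (z : Z) : ℝ :=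
  ∑ i, (A i).indicator (fun _ => c i) z

variable {A : ι → Set Z}

lemma stepFun_eq_of_mem (hdisj : Pairwise (Disjoint on A)) (c : ι → ℝ) {z : Z} {i : ι}
    (hz : z ∈ A i) : stepFun A c z = c i := by
  rw [stepFun, Finset.sum_eq_single i (fun j _ hji => Set.indicator_of_notMem
      (Set.disjoint_left.mp (hdisj hji).symm hz) _) (by simp), Set.indicator_of_mem hz]

lemma stepFun_nonneg {c : ι → ℝ} (hc : ∀ i, 0 ≤ c i) (z : Z) : 0 ≤ stepFun A c z :=
  Finset.sum_nonneg fun i _ => Set.indicator_nonneg (fun _ _ => hc i) z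

lemma stepFun_le (hdisj : Pairwise (Disjoint on A)) (hcover : ⋃ i, A i = Set.univ)
    {c : ι → ℝ} {b : ℝ} (hcb : ∀ i, c i ≤ b) (z : Z) : stepFun A c z ≤ b := by
  obtain ⟨i, hi⟩ := Set.mem_iUnion.1 (hcover ▸ Set.mem_univ z)
  exact (stepFun_eq_of_mem hdisj c hi).trans_le (hcb i)

lemma measurable_stepFun [MeasurableSpace Z] (hA : ∀ i, MeasurableSet (A i)) (c : ι → ℝ) :
    Measurable (stepFun A c) :=
  Finset.measurable_sum _ fun i _ => measurable_const.indicator (hA i)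

lemma integral_eq_sum_setIntegral [MeasurableSpace Z] {P : Measure Z}
    (hA : ∀ i, MeasurableSet (A i)) (hdisj : Pairwise (Disjoint on A))
    (hcover : ⋃ i, A i = Set.univ) {g : Z → ℝ}
    (hg : Integrable g P) : ∫ z, g z ∂P = ∑ i, ∫ z in A i, g z ∂P := by
  rw [← integral_iUnion_fintype hA hdisj fun i => hg.integrableOn, hcover, Measure.restrict_univ]

lemma integral_comp_stepFun [MeasurableSpace Z] {P : Measure Z} [IsFiniteMeasure P]
    (hA : ∀ i, MeasurableSet (A i)) (hdisj : Pairwise (Disjoint on A))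
    (hcover : ⋃ i, A i = Set.univ) (φ : ℝ → ℝ)
    (c : ι → ℝ) : ∫ z, φ (stepFun A c z) ∂P = ∑ i, P.real (A i) * φ (c i) := by
  have hconst : ∀ i, Set.EqOn (fun z => φ (stepFun A c z)) (fun _ => φ (c i)) (A i) :=
    fun i _ hz => congrArg φ (stepFun_eq_of_mem hdisj c hz)
  have hint : Integrable (fun z => φ (stepFun A c z)) P := by
    rw [← integrableOn_univ, ← hcover]
    exact integrableOn_finite_iUnion.2 fun i =>
      (integrableOn_const (measure_ne_top P _)).congr_fun (hconst i).symm (hA i)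
  rw [integral_eq_sum_setIntegral hA hdisj hcover hint]
  refine Finset.sum_congr rfl fun i _ => ?_
  rw [setIntegral_congr_fun (hA i) (hconst i), setIntegral_const, smul_eq_mul]

theorem integral_integral_eq_integral_stepFun [MeasurableSpace Z] {H : Type*} [MeasurableSpace H]
    {P : Measure Z} [IsFiniteMeasure P] {π : Measure H} [IsFiniteMeasure π]
    (hA : ∀ i, MeasurableSet (A i)) (hdisj : Pairwise (Disjoint on A))
    (hcover : ⋃ i, A i = Set.univ) {ℓ : H → Z → ℝ} (hℓ : Measurable (uncurry ℓ)) {C : ℝ}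
    (hC : ∀ h z, ‖ℓ h z‖ ≤ C) :
    ∫ h, ∫ z, ℓ h z ∂P ∂π = ∫ z, stepFun A (fun i => ∫ h, condAvg P (ℓ h) (A i) ∂π) z ∂P := by
  have hℓ_int : ∀ h, Integrable (ℓ h) P := fun h =>
    .of_bound (hℓ.comp measurable_prodMk_left).aestronglyMeasurable C (ae_of_all _ (hC h))
  have hpart_int : ∀ i, Integrable (fun h => ∫ z in A i, ℓ h z ∂P) π := fun i =>
    .of_bound
      (hℓ.stronglyMeasurable.integral_prod_right' (ν := P.restrict (A i))).aestronglyMeasurable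
      (C * P.real (A i)) (ae_of_all _ fun h =>
        norm_setIntegral_le_of_norm_le_const (measure_lt_top P _) fun z _ => hC h z)
  calc ∫ h, ∫ z, ℓ h z ∂P ∂π = ∫ h, ∑ i, ∫ z in A i, ℓ h z ∂P ∂π :=
        integral_congr_ae <| ae_of_all _ fun h =>
          integral_eq_sum_setIntegral hA hdisj hcover (hℓ_int h)
    _ = ∑ i, ∫ h, ∫ z in A i, ℓ h z ∂P ∂π := integral_finsetSum _ fun i _ => hpart_int i
    _ = ∑ i, P.real (A i) * ∫ h, condAvg P (ℓ h) (A i) ∂π := by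
        simp_rw [← integral_const_mul, measureReal_mul_condAvg]
    _ = ∫ z, stepFun A (fun i => ∫ h, condAvg P (ℓ h) (A i) ∂π) z ∂P :=
        (integral_comp_stepFun hA hdisj hcover id _).symm

lemma sum_stepFun_eq_sum_cnt_mul {n : ℕ} (S : Fin n → Z) (c : ι → ℝ) :
    ∑ j, stepFun A c (S j) = ∑ i, (cnt S (A i) : ℝ) * c i := by
  classical
  simp only [stepFun, Set.indicator_apply]
  rw [Finset.sum_comm]
  refine Finset.sum_congr rfl fun i _ => ?_
  rw [← Finset.sum_filter, Finset.sum_const, nsmul_eq_mul, cnt]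

end Partition

lemma sum_Tset_cnt_div_mul {n K : ℕ} (S : Fin n → Z) (A : Fin K → Set Z) (c : Fin K → ℝ) :
    ∑ i ∈ Tset S A, (cnt S (A i) : ℝ) / n * c i = (∑ j, stepFun A c (S j)) / n := by
  rw [sum_stepFun_eq_sum_cnt_mul, Finset.sum_div,
    Finset.sum_subset (Finset.subset_univ (Tset S A)) fun i _ hi => ?_]
  · exact Finset.sum_congr rfl fun i _ => by ring
  · simp_all [Tset]

theorem statement9_general {Z : Type*} [MeasurableSpace Z] (P : Measure Z) [IsProbabilityMeasure P]
    {K : ℕ} (Zpart : Fin K → Set Z)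
    (hZmeas : ∀ i, MeasurableSet (Zpart i))
    (hZdisj : ∀ i j, i ≠ j → Disjoint (Zpart i) (Zpart j))
    (hZcover : (⋃ i, Zpart i) = Set.univ)
    {H : Type*} [MeasurableSpace H] (π : Measure H) [IsProbabilityMeasure π]
    (ℓ : H → Z → ℝ) (hℓmeas : Measurable (Function.uncurry ℓ))
    (hℓnonneg : ∀ h z, 0 ≤ ℓ h z) (hℓbdd : ∃ C, ∀ h z, ℓ h z ≤ C)
    {n : ℕ}
    (abar : Fin K → ℝ) (habar : ∀ i, abar i = ∫ h, condAvg P (ℓ h) (Zpart i) ∂π)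
    (ahat : ℝ) (hahat : IsGreatest (Set.range abar) ahat)
    (β : ℝ) (hβdef : β = 2 * ∑ j, (P (Zpart j)).toReal * abar j ^ 2)
    (δ : ℝ) (hδ : Real.exp (-((n : ℝ) * β) / (2 * ahat ^ 2)) ≤ δ) :
    ENNReal.ofReal (1 - δ) ≤
      (Measure.pi fun _ : Fin n => P)
        {S | (Real.sqrt (∑ i ∈ Tset S Zpart, ((cnt S (Zpart i) : ℝ) / n) * abar i
                  + ahat * Real.log (1 / δ) / n)
              - Real.sqrt (ahat * Real.log (1 / δ) / n)) ^ 2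
            ≤ ∫ h, ∫ z, ℓ h z ∂P ∂π} := by
  rcases le_or_gt 1 δ with hδ1 | hδ1
  · simp [ENNReal.ofReal_eq_zero.2 (sub_nonpos.2 hδ1)]
  obtain ⟨hahat_ne, hnβ, hlog⟩ := log_one_div_mul_sq_le_of_exp_neg_div_le hδ1 hδ
  have hδ0 : 0 < δ := (Real.exp_pos _).trans_le hδ
  have hn : 0 < n := Nat.pos_of_ne_zero fun h => by simp [h] at hnβ
  have hdisj : Pairwise (Disjoint on Zpart) := hZdisj
  obtain ⟨C, hC⟩ := hℓbdd
  have habar0 : ∀ i, 0 ≤ abar i := fun i => habar i ▸ integral_nonneg fun h =>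
    condAvg_nonneg (hℓnonneg h) _
  have hahat0 : 0 < ahat := by
    obtain ⟨i, hi⟩ := hahat.1
    exact (hi ▸ habar0 i).lt_of_ne' hahat_ne
  set f := stepFun Zpart abar
  have hf0 : ∀ z, 0 ≤ f z := stepFun_nonneg habar0
  have hmean : ∫ h, ∫ z, ℓ h z ∂P ∂π = ∫ z, f z ∂P := by
    rw [integral_integral_eq_integral_stepFun hZmeas hdisj hZcover hℓmeas
      fun h z => (Real.norm_of_nonneg (hℓnonneg h z)).trans_le (hC h z), ← funext habar]
  have hV : (n : ℝ) * β / 2 = n * ∫ z, f z ^ 2 ∂P := by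
    rw [hβdef, integral_comp_stepFun hZmeas hdisj hZcover (· ^ 2)]
    simp only [measureReal_def]
    ring
  have ht : 0 ≤ Real.log (1 / δ) := Real.log_nonneg (by rw [le_div_iff₀ hδ0]; linarith)
  have htail := measureReal_pi_mean_ge_le_exp (measurable_stepFun hZmeas abar) hahat0 hf0
    (stepFun_le hdisj hZcover fun i => hahat.2 ⟨i, rfl⟩) hn ht (hlog.trans_eq hV)
  rw [show Real.exp (-Real.log (1 / δ)) = δ by
    rw [one_div, Real.log_inv, neg_neg, Real.exp_log hδ0]] at htail
  refine (ofReal_one_sub_le_measure_compl htail).trans (measure_mono fun S hS => ?_)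
  simp only [Set.mem_compl_iff, Set.mem_ofPred_eq, not_le] at hS ⊢
  rw [hmean, sum_Tset_cnt_div_mul]
  exact sq_sqrt_add_sub_sqrt_le (div_nonneg (Finset.sum_nonneg fun j _ => hf0 _) n.cast_nonneg)
    (integral_nonneg hf0) (div_nonneg (mul_nonneg hahat0.le ht) n.cast_nonneg) hS.le

/-- Lower bound for the average error of a model family. -/
theorem statement9 {Z : Type*} [MeasurableSpace Z] (P : Measure Z) [IsProbabilityMeasure P]
    {K : ℕ} (Zpart : Fin K → Set Z)
    (hZmeas : ∀ i, MeasurableSet (Zpart i))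
    (hZdisj : ∀ i j, i ≠ j → Disjoint (Zpart i) (Zpart j))
    (hZcover : (⋃ i, Zpart i) = Set.univ)
    (hZpos : ∀ i, 0 < P (Zpart i))
    {H : Type*} [MeasurableSpace H] (π : Measure H) [IsProbabilityMeasure π]
    (ℓ : H → Z → ℝ) (hℓmeas : Measurable (Function.uncurry ℓ))
    (hℓnonneg : ∀ h z, 0 ≤ ℓ h z) (hℓbdd : ∃ C, ∀ h z, ℓ h z ≤ C)
    {n : ℕ} (hn : 0 < n)
    (abar : Fin K → ℝ) (habar : ∀ i, abar i = ∫ h, condAvg P (ℓ h) (Zpart i) ∂π)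
    (ahat : ℝ) (hahat : IsGreatest (Set.range abar) ahat)
    (β : ℝ) (hβdef : β = 2 * ∑ j, (P (Zpart j)).toReal * abar j ^ 2) (hβ : 0 < β)
    (δ : ℝ) (hδ : Real.exp (-((n : ℝ) * β) / (2 * ahat ^ 2)) ≤ δ) :
    ENNReal.ofReal (1 - δ) ≤
      (Measure.pi fun _ : Fin n => P)
        {S | (Real.sqrt (∑ i ∈ Tset S Zpart, ((cnt S (Zpart i) : ℝ) / n) * abar i
                  + ahat * Real.log (1 / δ) / n)
              - Real.sqrt (ahat * Real.log (1 / δ) / n)) ^ 2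
            ≤ ∫ h, ∫ z, ℓ h z ∂P ∂π} :=
  statement9_general P Zpart hZmeas hZdisj hZcover π ℓ hℓmeas hℓnonneg hℓbdd abar habar ahat hahat β
    hβdef δ hδ
end

section
/- (Concentration for multinomial random vectors with data-independent coefficients.) Let (n_1, ..., n_K) be the counts of n i.i.d. samples from a categorical distribution with probabilities (p_1, ..., p_K), i.e., a multinomial random vector with parameters n and (p_1, ..., p_K). Fix nonnegative reals a_1, ..., a_K, let T_S = \{i : n_i > 0\} and a_o = \max_{j \notin T_S} a_j (taken as 0 if T_S = [K]). Then for any \delta > 0, with probability at least 1 - \delta: \sum_{i=1}^{K} a_i (p_i - n_i/n) \le \sqrt{ \ln(2K/\delta)/n } \sum_{i \in T_S} (a_o + \sqrt{2} a_i) \sqrt{n_i/n} + (2 \ln(2K/\delta)/n) \left( a_o |T_S| + \sum_{i \in T_S} a_i \right). -/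
open MeasureTheory Finset

open scoped Classical in
/-- `max_{j ∉ T_S} a j`, taken to be `0` when every category is hit. -/
noncomputable def aOut {n K : ℕ} (ω : Fin n → Fin K) (a : Fin K → ℝ) : ℝ :=
  if h : ((Finset.univ.filter fun i => cnt ω ({i} : Set (Fin K)) = 0).image a).Nonempty
  then ((Finset.univ.filter fun i => cnt ω ({i} : Set (Fin K)) = 0).image a).max' h
  else 0

/-! With `c = log (2K/δ) / n`, `q_i = n_i / n` and `v = a_o`, the identity `∑ p = ∑ q = 1` gives
`∑ a_i (p_i - q_i) = ∑ (a_i - v)⁺ (p_i - q_i) + ∑ (v - a_i)⁺ (q_i - p_i)`.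
Indices outside `T_S` do not contribute to the first sum, and on `T_S` the multiplicative Chernoff
bound `p_i - q_i ≤ √(2 c p_i)` turns into `p_i - q_i ≤ √(2 c q_i) + 2c`. The second sum is the
empirical deviation of the `[0, a_j]`-valued function `(a_j - a)⁺` for the index `j` attaining
`a_o`, which Hoeffding's inequality bounds by `√c a_j`; as `j` depends on the sample, this is
required for every `j`. Each of these `2K` events fails with probability at most `δ / (2K)`. -/

open ProbabilityTheory Real Finset
open scoped NNReal

lemma exp_neg_le_one_sub_add_sq_div_two {u : ℝ} (hu : 0 ≤ u) : exp (-u) ≤ 1 - u + u ^ 2 / 2 := by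
  have h := quadratic_le_exp_of_nonneg hu
  rw [exp_neg, inv_le_iff_one_le_mul₀ (exp_pos u)]
  have hpos : (0 : ℝ) ≤ 1 - u + u ^ 2 / 2 := by nlinarith [sq_nonneg (u - 1)]
  nlinarith [mul_le_mul_of_nonneg_left h hpos, pow_nonneg hu 4]

section ProductMeasure

variable {α ι : Type*} [MeasurableSpace α] (μ : Measure α) [IsProbabilityMeasure μ] [Fintype ι]

lemma mgf_sum_comp_eval_pi (X : α → ℝ) (t : ℝ) :
    mgf (fun ω : ι → α => ∑ j, X (ω j)) (Measure.pi fun _ => μ) t =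
      mgf X μ t ^ Fintype.card ι := by
  simp only [mgf, mul_sum, exp_sum]
  exact integral_fintype_prod_eq_pow (fun x => exp (t * X x))

lemma mgf_neg_le_of_mem_unitInterval {X : α → ℝ} (hX : Measurable X)
    (h01 : ∀ x, X x ∈ Set.Icc 0 1) {t : ℝ} (ht : 0 ≤ t) :
    mgf (-X) μ t ≤ exp (-t * μ[X] + t ^ 2 * μ[X] / 2) := by
  have hint : Integrable X μ := .of_mem_Icc 0 1 hX.aemeasurable (ae_of_all _ h01)
  have hpoint : ∀ x, exp (t * (-X) x) ≤ 1 + (-t + t ^ 2 / 2) * X x := fun x => by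
    obtain ⟨h0, h1⟩ := h01 x
    have := exp_neg_le_one_sub_add_sq_div_two (mul_nonneg ht h0)
    simp only [Pi.neg_apply, mul_neg]
    nlinarith [mul_le_mul_of_nonneg_left (mul_le_of_le_one_right h0 h1) (sq_nonneg t)]
  calc mgf (-X) μ t ≤ ∫ x, (1 + (-t + t ^ 2 / 2) * X x) ∂μ :=
        integral_mono (integrable_exp_mul_of_mem_Icc hX.neg.aemeasurable
          (a := -1) (b := 0) (ae_of_all _ fun x => by simp [(h01 x).1, (h01 x).2]))
          ((integrable_const 1).add (hint.const_mul _)) hpoint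
    _ = 1 + (-t * μ[X] + t ^ 2 * μ[X] / 2) := by
        rw [integral_add (integrable_const 1) (hint.const_mul _), integral_const_mul]
        simp only [integral_const, probReal_univ, smul_eq_mul, one_mul]
        ring
    _ ≤ exp (-t * μ[X] + t ^ 2 * μ[X] / 2) := by
        linarith [add_one_le_exp (-t * μ[X] + t ^ 2 * μ[X] / 2)]

lemma measureReal_le_sum_le_exp_mul_mgf_pow {X : α → ℝ} (hX : Measurable X) {a b : ℝ}
    (hab : ∀ x, X x ∈ Set.Icc a b) (ε : ℝ) {t : ℝ} (ht : 0 ≤ t) :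
    (Measure.pi fun _ : ι => μ).real {ω | ε ≤ ∑ j, X (ω j)} ≤
      exp (-t * ε) * mgf X μ t ^ Fintype.card ι := by
  have hbound : ∀ ω : ι → α, ∑ j, X (ω j) ∈ Set.Icc (Fintype.card ι * a) (Fintype.card ι * b) :=
    fun ω => ⟨by simpa using sum_le_sum fun j (_ : j ∈ univ) => (hab (ω j)).1,
      by simpa using sum_le_sum fun j (_ : j ∈ univ) => (hab (ω j)).2⟩
  rw [← mgf_sum_comp_eval_pi]
  exact measure_ge_le_exp_mul_mgf ε ht
    (integrable_exp_mul_of_mem_Icc (by fun_prop : Measurable _).aemeasurable (ae_of_all _ hbound))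

lemma measureReal_sum_lt_sub_sqrt_le {X : α → ℝ} (hX : Measurable X)
    (h01 : ∀ x, X x ∈ Set.Icc 0 1) {c : ℝ} (hc : 0 ≤ c) :
    (Measure.pi fun _ : ι => μ).real
        {ω | ∑ j, X (ω j) < Fintype.card ι * (μ[X] - √(2 * c * μ[X]))} ≤
      exp (-(Fintype.card ι * c)) := by
  set m := μ[X]
  set n : ℝ := (Fintype.card ι : ℝ)
  have hm0 : 0 ≤ m := integral_nonneg fun x => (h01 x).1
  rcases hm0.eq_or_lt with hm | hm
  · have hempty : {ω : ι → α | ∑ j, X (ω j) < n * (m - √(2 * c * m))} = ∅ := by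
      ext ω
      simp only [← hm, mul_zero, sqrt_zero, sub_zero, Set.mem_ofPred_eq,
        Set.mem_empty_iff_false, iff_false, not_lt]
      exact sum_nonneg fun j _ => (h01 (ω j)).1
    simp [hempty, measureReal_def, exp_nonneg]
  set s := √(2 * c * m)
  have hs : s ^ 2 = 2 * c * m := sq_sqrt (by positivity)
  set t := s / m
  have ht : 0 ≤ t := by positivity
  have hsub : {ω : ι → α | ∑ j, X (ω j) < n * (m - s)} ⊆
      {ω | -(n * (m - s)) ≤ ∑ j, (-X) (ω j)} := fun ω hω => by
    simp only [Set.mem_ofPred_eq, Pi.neg_apply, sum_neg_distrib] at hω ⊢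
    linarith
  have hneg : ∀ x, (-X) x ∈ Set.Icc (-1) 0 := fun x => by
    simp [(h01 x).1, (h01 x).2]
  calc _ ≤ _ := measureReal_mono hsub
    _ ≤ exp (-t * -(n * (m - s))) * mgf (-X) μ t ^ Fintype.card ι :=
        measureReal_le_sum_le_exp_mul_mgf_pow μ hX.neg hneg _ ht
    _ ≤ exp (-t * -(n * (m - s))) * exp (-t * m + t ^ 2 * m / 2) ^ Fintype.card ι := by
        gcongr
        · exact mgf_nonneg
        · exact mgf_neg_le_of_mem_unitInterval μ hX h01 ht
    _ = exp (-(n * c)) := by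
        rw [← exp_nat_mul, ← exp_add]
        have hts : t * s = 2 * c := by
          rw [div_mul_eq_mul_div, ← sq, hs]; field_simp
        have htm : t ^ 2 * m = 2 * c := by
          rw [div_pow, hs]; field_simp
        congr 1
        linear_combination (-n) * hts + (n / 2) * htm

lemma measureReal_mul_sqrt_lt_sum_sub_integral_le {X : α → ℝ} (hX : Measurable X) {a b : ℝ}
    (hab : ∀ x, X x ∈ Set.Icc a b) {c : ℝ} (hc : 0 ≤ c) :
    (Measure.pi fun _ : ι => μ).real
        {ω | Fintype.card ι * √c * (b - a) < ∑ j, (X (ω j) - μ[X])} ≤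
      exp (-(2 * (Fintype.card ι * c))) := by
  set n : ℝ := (Fintype.card ι : ℝ)
  obtain ⟨x₀⟩ := nonempty_of_isProbabilityMeasure μ
  have hba : 0 ≤ b - a := sub_nonneg.2 ((hab x₀).1.trans (hab x₀).2)
  have hsubG : ∀ j, HasSubgaussianMGF (fun ω : ι → α => X (ω j) - μ[X])
      ((‖b - a‖₊ / 2) ^ 2) (Measure.pi fun _ => μ) := fun j => by
    refine HasSubgaussianMGF.of_map (X := fun x => X x - μ[X]) (Y := fun ω : ι → α => ω j)
      (measurable_pi_apply j).aemeasurable ?_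
    rw [(measurePreserving_eval (fun _ : ι => μ) j).map_eq]
    exact hasSubgaussianMGF_of_mem_Icc hX.aemeasurable (ae_of_all _ hab)
  have hindep : iIndepFun (fun j (ω : ι → α) => X (ω j) - μ[X]) (Measure.pi fun _ => μ) :=
    iIndepFun_pi (X := fun _ x => X x - μ[X]) fun _ => by fun_prop
  have hoeffding := HasSubgaussianMGF.measure_sum_ge_le_of_iIndepFun hindep (s := univ)
    (fun j _ => hsubG j) (ε := n * √c * (b - a)) (by positivity)
  have hvar : ((∑ _j : ι, (‖b - a‖₊ / 2) ^ 2 : ℝ≥0) : ℝ) = n * ((b - a) / 2) ^ 2 := by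
    simp [n, abs_of_nonneg hba]
  rw [hvar] at hoeffding
  rcases (mul_nonneg (Nat.cast_nonneg _ : (0 : ℝ) ≤ n) (sq_nonneg (b - a))).eq_or_lt with h0 | hpos
  · have hempty : {ω : ι → α | n * √c * (b - a) < ∑ j, (X (ω j) - μ[X])} = ∅ := by
      rcases mul_eq_zero.1 h0.symm with hn | hd
      · have : IsEmpty ι := Fintype.card_eq_zero_iff.1 (by exact_mod_cast hn)
        simp [n, hn]
      · have hX : ∀ x, X x = a := fun x => by
          linarith [(hab x).1, (hab x).2, pow_eq_zero_iff two_ne_zero |>.1 hd]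
        simp [hX, pow_eq_zero_iff two_ne_zero |>.1 hd]
    rw [hempty, measureReal_empty]
    exact (exp_pos _).le
  · have hsub : {ω : ι → α | n * √c * (b - a) < ∑ j, (X (ω j) - μ[X])} ⊆
        {ω | n * √c * (b - a) ≤ ∑ j, (X (ω j) - μ[X])} :=
      Set.ofPred_subset_ofPred.2 fun _ => le_of_lt
    refine (measureReal_mono hsub).trans (hoeffding.trans_eq ?_)
    have hd : b - a ≠ 0 := fun h => by simp [h] at hpos
    have hn : n ≠ 0 := fun h => by simp [n] at h; simp [h] at hpos
    congr 1
    field_simp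
    rw [sq_sqrt hc]

end ProductMeasure

lemma sub_le_mul_sqrt_add_sq {p q d : ℝ} (hp : 0 ≤ p) (hq : 0 ≤ q) (hd : 0 ≤ d)
    (h : p - q ≤ d * √p) : p - q ≤ d * √q + d ^ 2 := by
  obtain ⟨x, hx, rfl⟩ : ∃ x, 0 ≤ x ∧ p = x ^ 2 := ⟨√p, sqrt_nonneg p, (sq_sqrt hp).symm⟩
  obtain ⟨y, hy, rfl⟩ : ∃ y, 0 ≤ y ∧ q = y ^ 2 := ⟨√q, sqrt_nonneg q, (sq_sqrt hq).symm⟩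
  rw [sqrt_sq hx] at h
  rw [sqrt_sq hy]
  have hxy : x ≤ y + d := by
    by_contra! hlt
    nlinarith [mul_le_mul_of_nonneg_left hlt.le hx, mul_nonneg hy (sub_nonneg.2 hlt.le)]
  nlinarith [mul_le_mul_of_nonneg_left hxy hd]

lemma sum_mul_sub_le_of_deviation_bounds {ι : Type*} [Fintype ι] {p q a : ι → ℝ} {T : Finset ι}
    {v c : ℝ} (hp : ∀ i, 0 ≤ p i) (hq : ∀ i, 0 ≤ q i) (hpsum : ∑ i, p i = 1)
    (hqsum : ∑ i, q i = 1) (ha : ∀ i, 0 ≤ a i) (hv : 0 ≤ v) (hc : 0 ≤ c)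
    (hout : ∀ i ∉ T, q i = 0 ∧ a i ≤ v) (hlower : ∀ i, p i - q i ≤ √(2 * c * p i))
    (hbelow : ∑ i, max (v - a i) 0 * (q i - p i) ≤ √c * v) :
    ∑ i, a i * (p i - q i) ≤
      √c * ∑ i ∈ T, (v + √2 * a i) * √(q i) + 2 * c * (v * #T + ∑ i ∈ T, a i) := by
  have hshift : ∑ i, a i * (p i - q i) =
      ∑ i, max (a i - v) 0 * (p i - q i) + ∑ i, max (v - a i) 0 * (q i - p i) := by
    have hzero : ∑ i, v * (p i - q i) = 0 := by
      rw [← mul_sum, sum_sub_distrib, hpsum, hqsum, sub_self, mul_zero]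
    rw [← sub_eq_self (a := ∑ i, a i * (p i - q i)) |>.2 hzero, ← sum_sub_distrib,
      ← sum_add_distrib]
    refine sum_congr rfl fun i _ => ?_
    rcases le_total (a i) v with h | h
    · rw [max_eq_right (by linarith), max_eq_left (by linarith)]; ring
    · rw [max_eq_left (by linarith), max_eq_right (by linarith)]; ring
  have habove : ∑ i, max (a i - v) 0 * (p i - q i) ≤
      ∑ i ∈ T, a i * (√2 * √c * √(q i) + 2 * c) := by
    rw [← sum_subset (subset_univ T) fun i _ hi => by
      rw [max_eq_right (by linarith [(hout i hi).2]), zero_mul]]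
    refine sum_le_sum fun i _ => ?_
    have hgap : p i - q i ≤ √2 * √c * √(q i) + 2 * c := by
      have := sub_le_mul_sqrt_add_sq (hp i) (hq i) (sqrt_nonneg (2 * c))
        (by rw [← sqrt_mul (by positivity)]; exact hlower i)
      rwa [sq_sqrt (by positivity), sqrt_mul zero_le_two] at this
    exact (mul_le_mul_of_nonneg_left hgap (le_max_right _ _)).trans
      (mul_le_mul_of_nonneg_right (max_le (by linarith) (ha i)) (by positivity))
  have hTsum : ∑ i ∈ T, q i = 1 := by
    rwa [sum_subset (subset_univ T) fun i _ hi => (hout i hi).1]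
  have hsqrt : 1 ≤ ∑ i ∈ T, √(q i) := by
    have hq1 : ∀ i, q i ≤ 1 := fun i => hqsum ▸ single_le_sum (fun j _ => hq j) (mem_univ i)
    calc (1 : ℝ) = ∑ i ∈ T, q i := hTsum.symm
      _ ≤ ∑ i ∈ T, √(q i) := sum_le_sum fun i _ =>
          (le_sqrt (hq i) (hq i)).2 (by nlinarith [hq i, hq1 i])
  have hexpand : √c * ∑ i ∈ T, (v + √2 * a i) * √(q i) + 2 * c * (v * #T + ∑ i ∈ T, a i) =
      √c * v * ∑ i ∈ T, √(q i) + 2 * c * v * #T + ∑ i ∈ T, a i * (√2 * √c * √(q i) + 2 * c) := by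
    simp only [mul_add, add_mul, sum_add_distrib, mul_sum]
    ring_nf
  rw [hshift, hexpand]
  nlinarith [mul_le_mul_of_nonneg_left hsqrt (mul_nonneg (sqrt_nonneg c) hv),
    mul_nonneg (mul_nonneg hc hv) (Nat.cast_nonneg #T : (0 : ℝ) ≤ #T)]

section Counts

variable {Z : Type*} {n : ℕ}

lemma cnt_eq_sum_indicator (S : Fin n → Z) (A : Set Z) :
    (cnt S A : ℝ) = ∑ j, A.indicator 1 (S j) := by
  classical
  simp [cnt, Set.indicator_apply]

lemma sum_comp_eq_sum_cnt_mul [Fintype Z] (S : Fin n → Z) (F : Z → ℝ) :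
    ∑ j, F (S j) = ∑ z, (cnt S {z} : ℝ) * F z := by
  classical
  rw [← sum_fiberwise' univ S F]
  simp [cnt]

lemma sum_cnt_singleton [Fintype Z] (S : Fin n → Z) : ∑ z, (cnt S {z} : ℝ) = n := by
  simpa using (sum_comp_eq_sum_cnt_mul S 1).symm

end Counts

section OutsideMax

variable {n K : ℕ} (ω : Fin n → Fin K) (a : Fin K → ℝ)

lemma le_aOut {i : Fin K} (hi : cnt ω {i} = 0) : a i ≤ aOut ω a := by
  classical
  have hmem : a i ∈ (univ.filter fun i => cnt ω ({i} : Set (Fin K)) = 0).image a :=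
    mem_image_of_mem a (by simpa using hi)
  rw [aOut, dif_pos ⟨_, hmem⟩]
  exact le_max' _ _ hmem

lemma aOut_eq_zero_or_exists : aOut ω a = 0 ∨ ∃ j, aOut ω a = a j := by
  unfold aOut
  split_ifs with h
  · obtain ⟨j, -, hj⟩ := mem_image.1 (max'_mem _ h)
    exact Or.inr ⟨j, hj.symm⟩
  · exact Or.inl rfl

end OutsideMax

lemma sum_mul_sub_cnt_div_le {K n : ℕ} {p a : Fin K → ℝ} {c : ℝ} (hp : ∀ i, 0 ≤ p i)
    (hpsum : ∑ i, p i = 1) (ha : ∀ i, 0 ≤ a i) (hc : 0 ≤ c) (hn : 0 < n) (ω : Fin n → Fin K)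
    (hlower : ∀ i, p i - cnt ω {i} / n ≤ √(2 * c * p i))
    (hdev : ∀ j, ∑ j', (max (a j - a (ω j')) 0 - ∑ i, p i * max (a j - a i) 0) ≤ n * √c * a j) :
    ∑ i, a i * (p i - cnt ω {i} / n) ≤
      √c * ∑ i ∈ Tset ω (fun i => {i}), (aOut ω a + √2 * a i) * √(cnt ω {i} / n) +
        2 * c * (aOut ω a * #(Tset ω (fun i => {i})) + ∑ i ∈ Tset ω (fun i => {i}), a i) := by
  have hn' : (0 : ℝ) < n := Nat.cast_pos.2 hn
  have hv : 0 ≤ aOut ω a := by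
    obtain h | ⟨j, h⟩ := aOut_eq_zero_or_exists ω a <;> simp [h, ha]
  refine sum_mul_sub_le_of_deviation_bounds hp (fun i => by positivity) hpsum
    (by rw [← sum_div, sum_cnt_singleton, div_self hn'.ne']) ha hv hc
    (fun i hi => ?_) hlower ?_
  · have hi : cnt ω {i} = 0 := by simpa [Tset] using hi
    exact ⟨by simp [hi], le_aOut ω a hi⟩
  · obtain h | ⟨j, h⟩ := aOut_eq_zero_or_exists ω a
    · simp [h, ha]
    · have := hdev j
      rw [sum_sub_distrib, sum_const, card_univ, Fintype.card_fin, nsmul_eq_mul,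
        sum_comp_eq_sum_cnt_mul ω (fun i => max (a j - a i) 0)] at this
      have hscale : ∑ i, max (a j - a i) 0 * (cnt ω {i} / n - p i) =
          (∑ i, (cnt ω {i} : ℝ) * max (a j - a i) 0 - n * ∑ i, p i * max (a j - a i) 0) / n := by
        rw [eq_div_iff hn'.ne', sum_mul, mul_sum, ← sum_sub_distrib]
        refine sum_congr rfl fun i _ => ?_
        field_simp
      rw [h, hscale, div_le_iff₀ hn']
      linarith

lemma measureReal_sqrt_lt_sub_cnt_div_le {Z : Type*} [MeasurableSpace Z] (μ : Measure Z)
    [IsProbabilityMeasure μ] {A : Set Z} (hA : MeasurableSet A) {c : ℝ} (hc : 0 ≤ c) {n : ℕ}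
    (hn : 0 < n) :
    (Measure.pi fun _ : Fin n => μ).real {S | √(2 * c * μ.real A) < μ.real A - cnt S A / n} ≤
      exp (-(n * c)) := by
  have hn' : (0 : ℝ) < n := Nat.cast_pos.2 hn
  have h := measureReal_sum_lt_sub_sqrt_le μ (ι := Fin n) (X := A.indicator 1)
    (measurable_one.indicator hA) (fun x => by by_cases hx : x ∈ A <;> simp [hx]) hc
  rw [integral_indicator_one hA, Fintype.card_fin] at h
  refine (measureReal_mono (Set.ofPred_subset_ofPred.2 fun S hS => ?_)).trans h
  rw [← cnt_eq_sum_indicator, ← div_lt_iff₀' hn']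
  linarith

lemma ofReal_one_sub_sum_le_measure {Ω ι : Type*} [MeasurableSpace Ω] [Fintype ι]
    (P : Measure Ω) [IsProbabilityMeasure P] (bad : ι → Set Ω) {S : Set Ω}
    (hS : ∀ ω, (∀ i, ω ∉ bad i) → ω ∈ S) :
    ENNReal.ofReal (1 - ∑ i, P.real (bad i)) ≤ P S := by
  rw [← ofReal_measureReal]
  refine ENNReal.ofReal_le_ofReal ?_
  have hcover : Set.univ ⊆ (⋃ i, bad i) ∪ S := fun ω _ => by
    by_cases h : ∃ i, ω ∈ bad i
    · exact Or.inl (Set.mem_iUnion.2 h)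
    · exact Or.inr (hS ω fun i hi => h ⟨i, hi⟩)
  have := (measureReal_mono (μ := P) hcover).trans (measureReal_union_le _ _)
  rw [probReal_univ] at this
  linarith [measureReal_iUnion_fintype_le (μ := P) bad]

def badEvent {K : ℕ} (n : ℕ) (μ : Measure (Fin K)) (a : Fin K → ℝ) (c : ℝ) (i : Fin K) :
    Set (Fin n → Fin K) :=
  {ω | √(2 * c * μ.real {i}) < μ.real {i} - cnt ω {i} / n} ∪
    {ω | n * √c * a i < ∑ j, (max (a i - a (ω j)) 0 - ∑ x, μ.real {x} * max (a i - a x) 0)}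

lemma measureReal_badEvent_le {K n : ℕ} (μ : Measure (Fin K)) [IsProbabilityMeasure μ]
    {a : Fin K → ℝ} (ha : ∀ i, 0 ≤ a i) {c : ℝ} (hc : 0 ≤ c) (hn : 0 < n) (i : Fin K) :
    (Measure.pi fun _ : Fin n => μ).real (badEvent n μ a c i) ≤ 2 * exp (-(n * c)) := by
  have hlower := measureReal_sqrt_lt_sub_cnt_div_le μ (measurableSet_singleton i) hc hn
  have hdev := measureReal_mul_sqrt_lt_sum_sub_integral_le μ (ι := Fin n)
    (X := fun x => max (a i - a x) 0) (measurable_of_finite _) (a := 0) (b := a i)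
    (fun x => ⟨le_max_right _ _, max_le (by linarith [ha x]) (ha i)⟩) hc
  rw [integral_fintype .of_finite] at hdev
  simp only [Fintype.card_fin, sub_zero, smul_eq_mul] at hdev
  have hexp : exp (-(2 * (n * c))) ≤ exp (-(n * c)) := exp_le_exp.2 (by nlinarith)
  calc _ ≤ _ := measureReal_union_le _ _
    _ ≤ 2 * exp (-(n * c)) := by linarith

theorem statement16_general {K : ℕ}
    (p : Fin K → ℝ) (hp : ∀ i, 0 ≤ p i)
    (μ : Measure (Fin K)) [IsProbabilityMeasure μ]
    (hμ : ∀ i, μ {i} = ENNReal.ofReal (p i))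
    (a : Fin K → ℝ) (ha : ∀ i, 0 ≤ a i)
    {n : ℕ} (hn : 0 < n) (δ : ℝ) (hδ : 0 < δ) :
    ENNReal.ofReal (1 - δ) ≤
      (Measure.pi fun _ : Fin n => μ)
        {ω | ∑ i, a i * (p i - (cnt ω ({i} : Set (Fin K)) : ℝ) / n) ≤
          Real.sqrt (Real.log (2 * K / δ) / n) *
              ∑ i ∈ Tset ω (fun i => ({i} : Set (Fin K))),
                (aOut ω a + Real.sqrt 2 * a i) *
                  Real.sqrt ((cnt ω ({i} : Set (Fin K)) : ℝ) / n)
            + (2 * Real.log (2 * K / δ) / n) *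
              (aOut ω a * ((Tset ω (fun i => ({i} : Set (Fin K)))).card : ℝ)
                + ∑ i ∈ Tset ω (fun i => ({i} : Set (Fin K))), a i)} := by
  obtain hδ1 | hδ1 := le_or_gt 1 δ
  · rw [ENNReal.ofReal_of_nonpos (by linarith)]
    exact bot_le
  obtain rfl : p = fun i => μ.real {i} := funext fun i => by simp [measureReal_def, hμ, hp i]
  have hK : (1 : ℝ) ≤ K :=
    Nat.one_le_cast.2 (Fin.pos_iff_nonempty.2 (nonempty_of_isProbabilityMeasure μ))
  have hn' : (0 : ℝ) < n := Nat.cast_pos.2 hn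
  set c := Real.log (2 * K / δ) / n
  have hc : 0 < c := div_pos (Real.log_pos (by rw [lt_div_iff₀ hδ]; linarith)) hn'
  have hfail : exp (-(n * c)) = δ / (2 * K) := by
    rw [mul_div_cancel₀ _ hn'.ne', exp_neg, exp_log (by positivity), inv_div]
  refine (ENNReal.ofReal_le_ofReal ?_).trans
    (ofReal_one_sub_sum_le_measure _ (badEvent n μ a c) fun ω hω => ?_)
  · have := sum_le_sum fun i (_ : i ∈ univ) => measureReal_badEvent_le μ ha hc.le hn i
    rw [sum_const, card_univ, Fintype.card_fin, nsmul_eq_mul, hfail] at this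
    field_simp at this
    linarith
  · simp only [badEvent, Set.mem_union, Set.mem_ofPred_eq, not_or, not_lt] at hω
    rw [mul_div_assoc]
    exact sum_mul_sub_cnt_div_le (fun i => measureReal_nonneg) (by simp) ha hc.le hn ω
      (fun i => (hω i).1) (fun j => (hω j).2)

/-- Concentration for multinomial random vectors with
data-independent coefficients. -/
theorem statement16 {K : ℕ} (hK : 0 < K)
    (p : Fin K → ℝ) (hp : ∀ i, 0 ≤ p i) (hpsum : ∑ i, p i = 1)
    (μ : Measure (Fin K)) [IsProbabilityMeasure μ]
    (hμ : ∀ i, μ {i} = ENNReal.ofReal (p i))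
    (a : Fin K → ℝ) (ha : ∀ i, 0 ≤ a i)
    {n : ℕ} (hn : 0 < n) (δ : ℝ) (hδ : 0 < δ) :
    ENNReal.ofReal (1 - δ) ≤
      (Measure.pi fun _ : Fin n => μ)
        {ω | ∑ i, a i * (p i - (cnt ω ({i} : Set (Fin K)) : ℝ) / n) ≤
          Real.sqrt (Real.log (2 * K / δ) / n) *
              ∑ i ∈ Tset ω (fun i => ({i} : Set (Fin K))),
                (aOut ω a + Real.sqrt 2 * a i) *
                  Real.sqrt ((cnt ω ({i} : Set (Fin K)) : ℝ) / n)
            + (2 * Real.log (2 * K / δ) / n) *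
              (aOut ω a * ((Tset ω (fun i => ({i} : Set (Fin K)))).card : ℝ)
                + ∑ i ∈ Tset ω (fun i => ({i} : Set (Fin K))), a i)} :=
  statement16_general p hp μ hμ a ha hn δ hδ
end
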